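/- arXiv:2402.18384 — 2 statements merged into one kernel-verified Lean document; each statement's English description precedes it below -/
import Mathlib

section
/- Let f and g be tropical polynomials in n variables with Trop(f) ⊆ Trop(g). Then for every vertex (extreme point) v of the Newton polyhedron N(g) there exists a vertex u of the Newton polyhedron N(f) such that cone(N(f) − u) ⊆ cone(N(g) − v), i.e. the tangent cone of N(f) at u, translated so that u goes to v, is contained in the tangent cone of N(g) at v. -/
open Finset

/-- A tropical polynomial in `n` variables: `k ≥ 1` monomials with exponent
vectors `a i : Fin n → ℕ` and coefficients `c i : ℝ`, the pairs `(a i, c i)`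
being pairwise distinct. -/
structure TropPoly (n : ℕ) where
  k : ℕ
  hk : 0 < k
  a : Fin k → Fin n → ℕ
  c : Fin k → ℝ
  distinct : Function.Injective (fun i => (a i, c i))

namespace TropPoly

variable {n : ℕ}

/-- Value of the `i`-th tropical monomial at `x`: `⟨a i, x⟩ + c i`. -/
def mono (f : TropPoly n) (i : Fin f.k) (x : Fin n → ℝ) : ℝ :=
  (∑ j, (f.a i j : ℝ) * x j) + f.c i

/-- Value of the tropical polynomial: `f(x) = min_i (⟨a i, x⟩ + c i)`. -/
def eval (f : TropPoly n) (x : Fin n → ℝ) : ℝ :=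
  Finset.univ.inf' ⟨⟨0, f.hk⟩, Finset.mem_univ _⟩ (fun i => f.mono i x)

/-- The tropical hypersurface `Trop(f)`: points where the minimum is attained
at least at two distinct monomials. -/
def tropSet (f : TropPoly n) : Set (Fin n → ℝ) :=
  {x | ∃ i j : Fin f.k, i ≠ j ∧ f.mono i x = f.eval x ∧ f.mono j x = f.eval x}

/-- The Newton polyhedron `N(f) ⊆ ℝ^{n+1}`: the convex hull of the union of
the vertical rays `{(a i, c) : c ≥ c i}`. -/
def newton (f : TropPoly n) : Set ((Fin n → ℝ) × ℝ) :=
  convexHull ℝ {p | ∃ i : Fin f.k, p.1 = (fun j => (f.a i j : ℝ)) ∧ f.c i ≤ p.2}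

end TropPoly

/-- The linear functional `φ_x(z, a) = ⟨x, z⟩ + a` on `ℝ^{n+1}`. -/
def phi {n : ℕ} (x : Fin n → ℝ) (p : (Fin n → ℝ) × ℝ) : ℝ :=
  (∑ j, x j * p.1 j) + p.2

/-- The convex cone generated by a set `S`: all nonnegative linear
combinations of elements of `S`. -/
def coneGen {E : Type*} [AddCommMonoid E] [Module ℝ E] (S : Set E) : Set E :=
  {y | ∃ (m : ℕ) (t : Fin m → ℝ) (p : Fin m → E),
    (∀ i, 0 ≤ t i) ∧ (∀ i, p i ∈ S) ∧ y = ∑ i, t i • p i}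

section ConeLemmas
variable {E : Type*} [AddCommGroup E] [Module ℝ E]

lemma mem_coneGen {S : Set E} {x : E} (hx : x ∈ S) : x ∈ coneGen S :=
  ⟨1, fun _ => 1, fun _ => x, fun _ => zero_le_one, fun _ => hx, by simp⟩

lemma coneGen_zero (S : Set E) : (0:E) ∈ coneGen S :=
  ⟨0, fun i => i.elim0, fun i => i.elim0, fun i => i.elim0, fun i => i.elim0, by simp⟩

lemma coneGen_smul {S : Set E} {x : E} {r : ℝ} (hr : 0 ≤ r) (hx : x ∈ coneGen S) :
    r • x ∈ coneGen S := by
  obtain ⟨m, t, p, ht, hp, rfl⟩ := hx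
  exact ⟨m, fun i => r * t i, p, fun i => mul_nonneg hr (ht i), hp, by
    rw [Finset.smul_sum]; exact Finset.sum_congr rfl fun i _ => (smul_smul r (t i) (p i))⟩

lemma coneGen_add {S : Set E} {x y : E} (hx : x ∈ coneGen S) (hy : y ∈ coneGen S) :
    x + y ∈ coneGen S := by
  obtain ⟨m, t, p, ht, hp, rfl⟩ := hx
  obtain ⟨m', t', p', ht', hp', rfl⟩ := hy
  refine ⟨m + m', Fin.append t t', Fin.append p p', ?_, ?_, ?_⟩
  · intro i
    refine Fin.addCases (fun i => ?_) (fun i => ?_) i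
    · simpa [Fin.append_left] using ht i
    · simpa [Fin.append_right] using ht' i
  · intro i
    refine Fin.addCases (fun i => ?_) (fun i => ?_) i
    · simpa [Fin.append_left] using hp i
    · simpa [Fin.append_right] using hp' i
  · rw [Fin.sum_univ_add]
    simp [Fin.append_left, Fin.append_right]

lemma coneGen_sum {ι : Type*} {S : Set E} (s : Finset ι) (w : ι → ℝ) (q : ι → E)
    (hw : ∀ i ∈ s, 0 ≤ w i) (hq : ∀ i ∈ s, q i ∈ coneGen S) :
    (∑ i ∈ s, w i • q i) ∈ coneGen S := by
  classical
  induction s using Finset.induction with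
  | empty => simpa using coneGen_zero S
  | insert _ _ hnot ih =>
    rw [Finset.sum_insert hnot]
    exact coneGen_add (coneGen_smul (hw _ (Finset.mem_insert_self _ _)) (hq _ (Finset.mem_insert_self _ _)))
      (ih (fun i hi => hw i (Finset.mem_insert_of_mem hi)) (fun i hi => hq i (Finset.mem_insert_of_mem hi)))

lemma coneGen_subset {S T : Set E} (h : S ⊆ coneGen T) : coneGen S ⊆ coneGen T := by
  rintro y ⟨m, t, p, ht, hp, rfl⟩
  exact coneGen_sum Finset.univ t p (fun i _ => ht i) (fun i _ => h (hp i))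

lemma coneGen_convex (S : Set E) : Convex ℝ (coneGen S) := by
  intro x hx y hy a b ha hb _
  exact coneGen_add (coneGen_smul ha hx) (coneGen_smul hb hy)

lemma coneGen_range_eq {N : ℕ} (d : Fin N → E) :
    coneGen (Set.range d) =
      {y | ∃ c : Fin N → ℝ, (∀ j, 0 ≤ c j) ∧ y = ∑ j, c j • d j} := by
  classical
  ext y
  constructor
  · rintro ⟨m, t, p, ht, hp, rfl⟩
    choose σ hσ using hp
    refine ⟨fun j => ∑ i ∈ Finset.univ.filter (fun i => σ i = j), t i,
      fun j => Finset.sum_nonneg fun i _ => ht i, ?_⟩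
    rw [← Finset.sum_fiberwise Finset.univ σ (fun i => t i • p i)]
    refine Finset.sum_congr rfl fun j _ => ?_
    rw [Finset.sum_smul]
    refine Finset.sum_congr rfl fun i hi => ?_
    rw [Finset.mem_filter] at hi
    rw [← hσ i, hi.2]
  · rintro ⟨c, hc, rfl⟩
    exact ⟨N, c, d, hc, fun i => Set.mem_range_self i, rfl⟩

end ConeLemmas

section Cara
variable {E : Type*} [AddCommGroup E] [Module ℝ E]

lemma cone_cara_aux {N : ℕ} (d : Fin N → E) :
    ∀ (m : ℕ) (c : Fin N → ℝ), (Finset.univ.filter fun j => c j ≠ 0).card ≤ m →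
      (∀ j, 0 ≤ c j) →
    ∃ c' : Fin N → ℝ, (∀ j, 0 ≤ c' j) ∧ (∑ j, c' j • d j = ∑ j, c j • d j) ∧
      LinearIndependent ℝ (fun j : {j // c' j ≠ 0} => d j) := by
  classical
  intro m
  induction m with
  | zero =>
    intro c hcard hc
    have hc0 : ∀ j, c j = 0 := by
      intro j
      by_contra hj
      have hmem : j ∈ Finset.univ.filter fun j => c j ≠ 0 := by simp [hj]
      have := Finset.card_pos.mpr ⟨j, hmem⟩
      omega
    refine ⟨c, hc, rfl, ?_⟩
    have : IsEmpty {j // c j ≠ 0} := ⟨fun j => j.2 (hc0 j.1)⟩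
    exact linearIndependent_empty_type
  | succ m ih =>
    intro c hcard hc
    by_cases hli : LinearIndependent ℝ (fun j : {j // c j ≠ 0} => d j)
    · exact ⟨c, hc, rfl, hli⟩
    · obtain ⟨g, hg0, j₁, hgj₁⟩ := Fintype.not_linearIndependent_iff.mp hli
      set r : Fin N → ℝ := fun j => if h : c j ≠ 0 then g ⟨j, h⟩ else 0 with hrdef
      have hr0 : ∀ j, c j = 0 → r j = 0 := fun j hj => dif_neg (not_not.mpr hj)
      have hrsum : ∑ j, r j • d j = 0 := by
        calc ∑ j, r j • d j
            = ∑ j ∈ Finset.univ.filter (fun j => c j ≠ 0), r j • d j := by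
              refine (Finset.sum_filter_of_ne ?_).symm
              intro j _ hne
              by_cases hcj : c j = 0
              · exact absurd ((by rw [hr0 j hcj, zero_smul]) : r j • d j = 0) hne
              · exact hcj
          _ = ∑ j : {j // c j ≠ 0}, r ↑j • d ↑j :=
              Finset.sum_subtype _ (fun x => by simp) _
          _ = ∑ j : {j // c j ≠ 0}, g j • d ↑j := by
              refine Finset.sum_congr rfl fun j _ => ?_
              rw [hrdef]; simp only [dif_pos j.2]
          _ = 0 := hg0
      have hrj₁ : r ↑j₁ ≠ 0 := by
        rw [hrdef]; simpa only [dif_pos j₁.2] using hgj₁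
      have hone : ∃ ρ : Fin N → ℝ, (∑ j, ρ j • d j = 0) ∧ (∀ j, c j = 0 → ρ j = 0) ∧
          ∃ j, 0 < ρ j := by
        by_cases hpos : ∃ j, 0 < r j
        · exact ⟨r, hrsum, hr0, hpos⟩
        · push_neg at hpos
          refine ⟨-r, by simp [hrsum], fun j hj => by simp [hr0 j hj], ⟨j₁, ?_⟩⟩
          simp only [Pi.neg_apply]
          exact neg_pos.mpr (lt_of_le_of_ne (hpos _) hrj₁)
      obtain ⟨ρ, hρsum, hρ0, jp, hjp⟩ := hone
      set P := Finset.univ.filter (fun j => 0 < ρ j) with hPdef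
      have hPne : P.Nonempty := ⟨jp, by simp [hPdef, hjp]⟩
      obtain ⟨j₀, hj₀P, hj₀⟩ := Finset.exists_mem_eq_inf' hPne (fun j => c j / ρ j)
      set α := P.inf' hPne (fun j => c j / ρ j) with hαdef
      have hρj₀ : 0 < ρ j₀ := (Finset.mem_filter.mp hj₀P).2
      have hα0 : 0 ≤ α := hj₀ ▸ div_nonneg (hc j₀) hρj₀.le
      set c' : Fin N → ℝ := fun j => c j - α * ρ j with hc'def
      have hc' : ∀ j, 0 ≤ c' j := by
        intro j
        by_cases hj : 0 < ρ j
        · have hle : α ≤ c j / ρ j := Finset.inf'_le _ (by simp [hPdef, hj])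
          have := (le_div_iff₀ hj).mp hle
          simp only [hc'def]; linarith
        · push_neg at hj
          have : α * ρ j ≤ 0 := mul_nonpos_of_nonneg_of_nonpos hα0 hj
          simp only [hc'def]; linarith [hc j]
      have hsum : ∑ j, c' j • d j = ∑ j, c j • d j := by
        simp only [hc'def, sub_smul, Finset.sum_sub_distrib]
        have : ∑ j, (α * ρ j) • d j = α • ∑ j, ρ j • d j := by
          rw [Finset.smul_sum]
          exact Finset.sum_congr rfl fun j _ => by rw [smul_smul]
        rw [this, hρsum, smul_zero, sub_zero]
      have hj₀c : c j₀ ≠ 0 := by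
        intro hcj₀
        exact absurd (hρ0 j₀ hcj₀) hρj₀.ne'
      have hc'j₀ : c' j₀ = 0 := by
        simp only [hc'def, hj₀]
        field_simp
        ring
      have hsub : (Finset.univ.filter fun j => c' j ≠ 0) ⊆
          (Finset.univ.filter fun j => c j ≠ 0).erase j₀ := by
        intro j hj
        rw [Finset.mem_filter] at hj
        refine Finset.mem_erase.mpr ⟨?_, ?_⟩
        · rintro rfl; exact hj.2 hc'j₀
        · rw [Finset.mem_filter]
          refine ⟨Finset.mem_univ _, ?_⟩
          intro hcj
          exact hj.2 (by simp [hc'def, hcj, hρ0 j hcj])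
      have hcard' : (Finset.univ.filter fun j => c' j ≠ 0).card ≤ m := by
        have h1 := Finset.card_le_card hsub
        have h2 : j₀ ∈ Finset.univ.filter fun j => c j ≠ 0 := by simp [hj₀c]
        rw [Finset.card_erase_of_mem h2] at h1
        omega
      obtain ⟨c'', h1, h2, h3⟩ := ih c' hcard' hc'
      exact ⟨c'', h1, h2.trans hsum, h3⟩
end Cara

section Closed
variable {E : Type*} [AddCommGroup E] [Module ℝ E]

/-- Linear map sending coefficients to their combination. -/
def combMap {ι : Type*} [Fintype ι] (v : ι → E) : (ι → ℝ) →ₗ[ℝ] E where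
  toFun c := ∑ i, c i • v i
  map_add' c c' := by simp [add_smul, Finset.sum_add_distrib]
  map_smul' r c := by simp [Finset.smul_sum, smul_smul]

lemma combMap_ker {ι : Type*} [Fintype ι] {v : ι → E}
    (hv : LinearIndependent ℝ v) : LinearMap.ker (combMap v) = ⊥ := by
  rw [LinearMap.ker_eq_bot']
  intro c hc
  have := Fintype.linearIndependent_iff.mp hv c hc
  funext i; exact this i

end Closed

section Closed2
variable {E : Type*} [NormedAddCommGroup E] [NormedSpace ℝ E]

lemma isClosed_image_combMap {ι : Type*} [Fintype ι] {v : ι → E}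
    (hv : LinearIndependent ℝ v) :
    IsClosed ((combMap v) '' {c : ι → ℝ | ∀ i, 0 ≤ c i}) := by
  have hemb := LinearMap.isClosedEmbedding_of_injective (combMap_ker hv)
  have horth : IsClosed {c : ι → ℝ | ∀ i, 0 ≤ c i} := by
    have he : {c : ι → ℝ | ∀ i, 0 ≤ c i} = ⋂ i, {c : ι → ℝ | 0 ≤ c i} := by
      ext cc; simp [Set.mem_iInter]
    rw [he]
    exact isClosed_iInter fun i => isClosed_le continuous_const (continuous_apply i)
  exact hemb.isClosedMap _ horth

lemma isClosed_coneGen_range {N : ℕ} (d : Fin N → E) :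
    IsClosed (coneGen (Set.range d)) := by
  classical
  have key : coneGen (Set.range d) = ⋃ s : Finset (Fin N),
      (if LinearIndependent ℝ (fun j : {j // j ∈ s} => d ↑j)
        then (combMap (fun j : {j // j ∈ s} => d ↑j)) '' {c | ∀ i, 0 ≤ c i}
        else ∅) := by
    refine Set.Subset.antisymm ?_ ?_
    · intro y hy
      rw [coneGen_range_eq] at hy
      obtain ⟨c, hc, rfl⟩ := hy
      obtain ⟨c', hc', hsum, hli⟩ :=
        cone_cara_aux d (Finset.univ.filter fun j => c j ≠ 0).card c le_rfl hc
      set s := Finset.univ.filter fun j => c' j ≠ 0 with hs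
      have hli' : LinearIndependent ℝ (fun j : {j // j ∈ s} => d ↑j) := by
        refine hli.comp (fun (j : {j // j ∈ s}) =>
          (⟨j.1, (Finset.mem_filter.mp j.2).2⟩ : {j // c' j ≠ 0})) ?_
        intro a b hab
        simp only [Subtype.mk.injEq] at hab
        exact Subtype.ext hab
      refine Set.mem_iUnion.mpr ⟨s, ?_⟩
      rw [if_pos hli']
      refine ⟨fun j => c' ↑j, fun j => hc' _, ?_⟩
      show (∑ j : {j // j ∈ s}, c' ↑j • d ↑j) = ∑ j, c j • d j
      rw [← hsum, Finset.sum_coe_sort s (fun j => c' j • d j)]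
      exact Finset.sum_subset (Finset.filter_subset _ _) (fun j _ hj => by
        have hz : c' j = 0 := by
          by_contra hne
          exact hj (Finset.mem_filter.mpr ⟨Finset.mem_univ _, hne⟩)
        rw [hz, zero_smul])
    · intro y hy
      obtain ⟨s, hs⟩ := Set.mem_iUnion.mp hy
      by_cases hli : LinearIndependent ℝ (fun j : {j // j ∈ s} => d ↑j)
      · rw [if_pos hli] at hs
        obtain ⟨c, hc, rfl⟩ := hs
        show (∑ i : {j // j ∈ s}, c i • d ↑i) ∈ coneGen (Set.range d)
        exact coneGen_sum Finset.univ c (fun i => d ↑i) (fun i _ => hc i)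
          (fun i _ => mem_coneGen ⟨↑i, rfl⟩)
      · rw [if_neg hli] at hs
        exact absurd hs (Set.notMem_empty y)
  rw [key]
  exact isClosed_iUnion_of_finite fun s => by
    split_ifs with h
    exacts [isClosed_image_combMap h, isClosed_empty]

end Closed2

-- ### auxiliary definitions
namespace TropPoly
variable {n : ℕ}

/-- The generating set of the Newton polyhedron. -/
def gens (f : TropPoly n) : Set ((Fin n → ℝ) × ℝ) :=
  {p | ∃ i : Fin f.k, p.1 = (fun j => (f.a i j : ℝ)) ∧ f.c i ≤ p.2}

lemma newton_eq (f : TropPoly n) : f.newton = convexHull ℝ f.gens := rfl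

/-- The generator point of the `i`-th monomial. -/
def pgen (f : TropPoly n) (i : Fin f.k) : (Fin n → ℝ) × ℝ :=
  ((fun j => (f.a i j : ℝ)), f.c i)

lemma pgen_mem_gens (f : TropPoly n) (i : Fin f.k) : f.pgen i ∈ f.gens :=
  ⟨i, rfl, le_rfl⟩

lemma pgen_mem_newton (f : TropPoly n) (i : Fin f.k) : f.pgen i ∈ f.newton :=
  subset_convexHull ℝ _ (f.pgen_mem_gens i)

lemma pgen_injective (f : TropPoly n) : Function.Injective f.pgen := by
  intro i j hij
  apply f.distinct
  have h1 : (fun j' => (f.a i j' : ℝ)) = (fun j' => (f.a j j' : ℝ)) :=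
    congrArg Prod.fst hij
  have h2 : f.c i = f.c j := congrArg Prod.snd hij
  have h3 : f.a i = f.a j := by
    funext j'
    exact_mod_cast congrFun h1 j'
  simp [h3, h2]

lemma eval_le (f : TropPoly n) (i : Fin f.k) (x : Fin n → ℝ) : f.eval x ≤ f.mono i x :=
  Finset.inf'_le _ (Finset.mem_univ _)

lemma exists_eval_eq (f : TropPoly n) (x : Fin n → ℝ) : ∃ i, f.mono i x = f.eval x := by
  obtain ⟨i, _, hi⟩ := Finset.exists_mem_eq_inf' ⟨⟨0, f.hk⟩, Finset.mem_univ _⟩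
    (fun i => f.mono i x)
  exact ⟨i, hi.symm⟩

lemma mono_affine (f : TropPoly n) (i : Fin f.k) (x y : Fin n → ℝ) {s t : ℝ}
    (hst : s + t = 1) :
    f.mono i (fun j => s * x j + t * y j) = s * f.mono i x + t * f.mono i y := by
  simp only [mono]
  have h1 : ∑ j, (f.a i j : ℝ) * (s * x j + t * y j)
      = s * (∑ j, (f.a i j : ℝ) * x j) + t * (∑ j, (f.a i j : ℝ) * y j) := by
    rw [Finset.mul_sum, Finset.mul_sum, ← Finset.sum_add_distrib]
    exact Finset.sum_congr rfl fun j _ => by ring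
  rw [h1]
  linear_combination (f.c i) * hst.symm

lemma mono_continuous (f : TropPoly n) (i : Fin f.k) :
    Continuous (fun x => f.mono i x) := by
  unfold mono
  exact (continuous_finset_sum _ fun j _ =>
    continuous_const.mul (continuous_apply j)).add continuous_const

end TropPoly

/-- The linear functional `ψ_{x,t}(z) = ⟨x, z.1⟩ + t z.2`. -/
def psiL {n : ℕ} (x : Fin n → ℝ) (t : ℝ) : ((Fin n → ℝ) × ℝ) →ₗ[ℝ] ℝ where
  toFun p := (∑ j, x j * p.1 j) + t * p.2
  map_add' p q := by
    simp only [Prod.fst_add, Pi.add_apply, Prod.snd_add, mul_add, Finset.sum_add_distrib]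
    ring
  map_smul' r p := by
    simp only [Prod.smul_fst, Prod.smul_snd, Pi.smul_apply, smul_eq_mul, RingHom.id_apply]
    have h1 : ∑ j, x j * (r * p.1 j) = r * ∑ j, x j * p.1 j := by
      rw [Finset.mul_sum]; exact Finset.sum_congr rfl fun j _ => by ring
    rw [h1]; ring

lemma psiL_apply {n : ℕ} (x : Fin n → ℝ) (t : ℝ) (p : (Fin n → ℝ) × ℝ) :
    psiL x t p = (∑ j, x j * p.1 j) + t * p.2 := rfl

lemma psi_comb {n : ℕ} (a b : ℝ) (x₁ x₂ : Fin n → ℝ) (t₁ t₂ : ℝ) (z : (Fin n → ℝ) × ℝ) :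
    psiL (fun j => a * x₁ j + b * x₂ j) (a * t₁ + b * t₂) z
      = a * psiL x₁ t₁ z + b * psiL x₂ t₂ z := by
  simp only [psiL_apply]
  have h1 : ∑ j, (a * x₁ j + b * x₂ j) * z.1 j
      = a * (∑ j, x₁ j * z.1 j) + b * (∑ j, x₂ j * z.1 j) := by
    rw [Finset.mul_sum, Finset.mul_sum, ← Finset.sum_add_distrib]
    exact Finset.sum_congr rfl fun j _ => by ring
  rw [h1]; ring

lemma psi_div {n : ℕ} (x : Fin n → ℝ) {t : ℝ} (ht : t ≠ 0) (z : (Fin n → ℝ) × ℝ) :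
    psiL x t z = t * psiL (fun j => x j / t) 1 z := by
  simp only [psiL_apply]
  have h1 : ∑ j, x j * z.1 j = t * ∑ j, (x j / t) * z.1 j := by
    rw [Finset.mul_sum]
    exact Finset.sum_congr rfl fun j _ => by field_simp
  rw [h1]; ring

lemma psi_pgen {n : ℕ} (f : TropPoly n) (i : Fin f.k) (x : Fin n → ℝ) :
    psiL x 1 (f.pgen i) = f.mono i x := by
  simp only [psiL_apply, TropPoly.pgen, TropPoly.mono, one_mul]
  congr 1
  exact Finset.sum_congr rfl fun j _ => mul_comm _ _

lemma psi_gens {n : ℕ} (f : TropPoly n) (i : Fin f.k) (x : Fin n → ℝ)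
    {s : (Fin n → ℝ) × ℝ} (hs : s.1 = (fun j => (f.a i j : ℝ))) :
    psiL x 1 s = f.mono i x + (s.2 - f.c i) := by
  simp only [psiL_apply, TropPoly.mono, hs, one_mul]
  have : ∑ j, x j * (f.a i j : ℝ) = ∑ j, (f.a i j : ℝ) * x j :=
    Finset.sum_congr rfl fun j _ => mul_comm _ _
  rw [this]; ring

/-- min of a linear functional over a convex hull. -/
lemma psi_hull_le {n : ℕ} {x : Fin n → ℝ} {t r : ℝ} {S : Set ((Fin n → ℝ) × ℝ)}
    (h : ∀ s ∈ S, r ≤ psiL x t s) : ∀ z ∈ convexHull ℝ S, r ≤ psiL x t z := by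
  intro z hz
  exact convexHull_min h (convex_halfSpace_ge (psiL x t).isLinear r) hz

lemma combo_le_lt {a b s1 t1 s2 t2 : ℝ} (ha : 0 ≤ a) (hb : 0 < b)
    (h1 : s1 ≤ t1) (h2 : s2 < t2) : a * s1 + b * s2 < a * t1 + b * t2 := by
  have := mul_le_mul_of_nonneg_left h1 ha
  have := mul_lt_mul_of_pos_left h2 hb
  linarith

lemma combo_lt_lt {a b s1 t1 s2 t2 : ℝ} (ha : 0 ≤ a) (hb : 0 ≤ b) (hab : a + b = 1)
    (h1 : s1 < t1) (h2 : s2 < t2) : a * s1 + b * s2 < a * t1 + b * t2 := by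
  rcases ha.lt_or_eq with ha' | ha'
  · have := mul_lt_mul_of_pos_left h1 ha'
    have := mul_le_mul_of_nonneg_left h2.le hb
    linarith
  · have hb1 : b = 1 := by linarith
    simp [← ha', hb1, h2]

lemma nonneg_of_small (α γ : ℝ) (h : ∀ s : ℝ, 0 < s → s ≤ 1 → 0 ≤ α + s * γ) :
    0 ≤ α := by
  by_contra hneg
  push_neg at hneg
  have hD : (0:ℝ) < 2 * (|γ| + 1) := by positivity
  set s := min 1 (-α / (2 * (|γ| + 1))) with hs
  have hspos : 0 < s := lt_min one_pos (div_pos (by linarith) hD)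
  have h2 := h s hspos (min_le_left _ _)
  have hsle : s * (2 * (|γ| + 1)) ≤ -α := (le_div_iff₀ hD).mp (min_le_right _ _)
  have habs : s * γ ≤ s * |γ| := mul_le_mul_of_nonneg_left (le_abs_self γ) hspos.le
  nlinarith

lemma clm_decomp {n : ℕ} (ℓ : ((Fin n → ℝ) × ℝ) →L[ℝ] ℝ) (p : (Fin n → ℝ) × ℝ) :
    ℓ p = psiL (fun j => ℓ ((Pi.single j 1 : Fin n → ℝ), (0:ℝ)))
      (ℓ ((0 : Fin n → ℝ), (1:ℝ))) p := by
  have hp : p = (∑ j, p.1 j • (((Pi.single j 1 : Fin n → ℝ)), (0:ℝ)))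
      + p.2 • ((0 : Fin n → ℝ), (1:ℝ)) := by
    refine Prod.ext ?_ ?_
    · simp only [Prod.fst_add, Prod.fst_sum, Prod.smul_fst, Prod.smul_snd, smul_zero,
        Prod.snd_add]
      have : ∀ j : Fin n, p.1 j • (Pi.single j (1:ℝ) : Fin n → ℝ) = (Pi.single j (p.1 j) : Fin n → ℝ) := by
        intro j
        funext j'
        by_cases hj : j' = j <;> simp [Pi.single_apply, hj]
      simp only [this, Finset.univ_sum_single]
      simp
    · simp [Prod.snd_sum]
  conv_lhs => rw [hp]
  rw [map_add, map_sum]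
  simp only [map_smul, smul_eq_mul]
  rw [psiL_apply]
  rw [mul_comm (ℓ ((0 : Fin n → ℝ), (1:ℝ))) p.2]
  congr 1
  exact Finset.sum_congr rfl fun j _ => mul_comm _ _


/-- if `Trop(f) ⊆ Trop(g)` then for every extreme point `v` of
`N(g)` there is an extreme point `u` of `N(f)` with
`cone(N(f) - u) ⊆ cone(N(g) - v)`. -/
theorem tangentCone_subset_of_trop_subset {n : ℕ} (f g : TropPoly n)
    (h : f.tropSet ⊆ g.tropSet) :
    ∀ v ∈ Set.extremePoints ℝ g.newton,
      ∃ u ∈ Set.extremePoints ℝ f.newton,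
        coneGen ((fun z => z - u) '' f.newton) ⊆
          coneGen ((fun z => z - v) '' g.newton) := by
  intro v hv
  classical
  obtain ⟨hvmem, hvext⟩ := hv
  -- Step A: identify `v` as a generator point
  have hvS : v ∈ g.gens := extremePoints_convexHull_subset
    (show v ∈ Set.extremePoints ℝ (convexHull ℝ g.gens) from ⟨hvmem, hvext⟩)
  obtain ⟨istar, hv1, hv2⟩ := hvS
  have hv2' : v.2 = g.c istar := by
    by_contra hne
    have hlt : g.c istar < v.2 := lt_of_le_of_ne hv2 (fun hh => hne hh.symm)
    have hp : (v.1, g.c istar) ∈ g.newton := subset_convexHull ℝ _ ⟨istar, hv1, le_rfl⟩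
    have hq : (v.1, 2 * v.2 - g.c istar) ∈ g.newton :=
      subset_convexHull ℝ _ ⟨istar, hv1, by show g.c istar ≤ 2 * v.2 - g.c istar; linarith⟩
    have hseg : v ∈ openSegment ℝ ((v.1, g.c istar) : (Fin n → ℝ) × ℝ)
        (v.1, 2 * v.2 - g.c istar) := by
      refine ⟨1/2, 1/2, by norm_num, by norm_num, by norm_num, ?_⟩
      refine Prod.ext ?_ ?_
      · show (1/2 : ℝ) • v.1 + (1/2 : ℝ) • v.1 = v.1
        rw [← add_smul]; norm_num
      · show (1/2 : ℝ) * g.c istar + (1/2 : ℝ) * (2 * v.2 - g.c istar) = v.2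
        ring
    have hPeq := hvext hp hq hseg
    exact hne (congrArg Prod.snd hPeq).symm
  have hveq : v = g.pgen istar := Prod.ext hv1 hv2'
  -- the vertical direction
  set ee : (Fin n → ℝ) × ℝ := ((0 : Fin n → ℝ), (1:ℝ)) with heedef
  have hve_mem : v + ee ∈ g.gens := by
    refine ⟨istar, ?_, ?_⟩
    · show (v + ee).1 = _
      rw [Prod.fst_add, heedef]
      simpa using hv1
    · show g.c istar ≤ (v + ee).2
      rw [Prod.snd_add, heedef]
      simp [hv2']
  have hve_newton : v + ee ∈ g.newton := subset_convexHull ℝ _ hve_mem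
  -- Step B: an exposing functional for `v`
  set F : Set ((Fin n → ℝ) × ℝ) := (g.pgen '' {j | j ≠ istar}) ∪ {v + ee} with hFdef
  have hFfin : F.Finite := ((Set.toFinite _).image _).union (Set.finite_singleton _)
  have hFsub : F ⊆ g.newton := by
    rintro p (⟨j, _, rfl⟩ | rfl)
    · exact g.pgen_mem_newton j
    · exact hve_newton
  have hvnotF : v ∉ convexHull ℝ F := by
    intro hvF
    have hsub2 : convexHull ℝ F ⊆ g.newton := convexHull_min hFsub (convex_convexHull ℝ _)
    have hvext2 : v ∈ Set.extremePoints ℝ (convexHull ℝ F) :=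
      ⟨hvF, fun x₁ hx₁ x₂ hx₂ hseg => hvext (hsub2 hx₁) (hsub2 hx₂) hseg⟩
    have hvF2 : v ∈ F := extremePoints_convexHull_subset hvext2
    rcases hvF2 with ⟨j, hj, hjeq⟩ | hsing
    · exact hj (g.pgen_injective (hjeq.trans hveq))
    · have h2 := congrArg Prod.snd hsing
      rw [Prod.snd_add, heedef] at h2
      simp at h2
  obtain ⟨ℓ, r, hl1, hl2⟩ := geometric_hahn_banach_point_closed
    (convex_convexHull ℝ F) ((hFfin.isCompact_convexHull (𝕜 := ℝ)).isClosed) hvnotF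
  -- decompose ℓ as ψ_{xl, tl}
  set xl : Fin n → ℝ := fun j => ℓ ((Pi.single j 1 : Fin n → ℝ), (0:ℝ)) with hxldef
  set tl : ℝ := ℓ ((0 : Fin n → ℝ), (1:ℝ)) with htldef
  have hψ : ∀ p, ℓ p = psiL xl tl p := fun p => clm_decomp ℓ p
  have htl : 0 < tl := by
    have h1 := hl2 (v + ee) (subset_convexHull ℝ _ (by rw [hFdef]; exact Or.inr rfl))
    have h2 : ℓ (v + ee) = ℓ v + ℓ ee := map_add ℓ v ee
    have h3 : ℓ ee = tl := by rw [heedef]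
    linarith [hl1]
  set x₀ : Fin n → ℝ := fun j => xl j / tl with hx₀def
  have hmono_div : ∀ i : Fin g.k, tl * g.mono i x₀ = ℓ (g.pgen i) := by
    intro i
    rw [hψ (g.pgen i), psiL_apply]
    show tl * ((∑ j, (g.a i j : ℝ) * (xl j / tl)) + g.c i)
      = (∑ j, xl j * (g.pgen i).1 j) + tl * (g.pgen i).2
    rw [mul_add, Finset.mul_sum]
    congr 1
    exact Finset.sum_congr rfl fun j _ => by
      show tl * ((g.a i j : ℝ) * (xl j / tl)) = xl j * (g.a i j : ℝ)
      field_simp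
  have hx₀U : ∀ j, j ≠ istar → g.mono istar x₀ < g.mono j x₀ := by
    intro j hj
    have hmem : g.pgen j ∈ convexHull ℝ F := subset_convexHull ℝ _ (by
      rw [hFdef]; exact Or.inl ⟨j, hj, rfl⟩)
    have h2 : ℓ v < ℓ (g.pgen j) := lt_trans hl1 (hl2 _ hmem)
    rw [hveq, ← hmono_div istar, ← hmono_div j] at h2
    exact lt_of_mul_lt_mul_left h2 htl.le
  set U : Set (Fin n → ℝ) := {x | ∀ j, j ≠ istar → g.mono istar x < g.mono j x} with hUdef
  have hUx₀ : x₀ ∈ U := hx₀U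
  have hUconv : Convex ℝ U := by
    intro x hx y hy s t hs ht hst
    intro j hj
    have hrw : s • x + t • y = fun j' => s * x j' + t * y j' := by funext j'; simp
    show g.mono istar (s • x + t • y) < g.mono j (s • x + t • y)
    rw [hrw, g.mono_affine istar x y hst, g.mono_affine j x y hst]
    exact combo_lt_lt hs ht hst (hx j hj) (hy j hj)
  have hUg : ∀ x ∈ U, ∀ j, g.mono istar x ≤ g.mono j x := by
    intro x hx j
    by_cases hj : j = istar
    · rw [hj]
    · exact (hx j hj).le
  have hUtropf : ∀ x ∈ U, ∀ i j : Fin f.k,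
      f.mono i x = f.eval x → f.mono j x = f.eval x → i = j := by
    intro x hx i j hi hj
    by_contra hij
    obtain ⟨i', j', hij', hi', hj'⟩ := h ⟨i, j, hij, hi, hj⟩
    have key : ∀ a : Fin g.k, a ≠ istar → g.mono a x = g.eval x → False := by
      intro a ha hae
      have h1 : g.eval x ≤ g.mono istar x := g.eval_le istar x
      have h2 := hx a ha
      linarith
    by_cases hi'star : i' = istar
    · refine key j' ?_ hj'
      rw [← hi'star]
      exact hij'.symm
    · exact key i' hi'star hi'
  obtain ⟨ι₀, hι₀⟩ := f.exists_eval_eq x₀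
  have hstrict_at : ∀ x ∈ U, ∀ ι : Fin f.k, f.mono ι x = f.eval x →
      ∀ i, i ≠ ι → f.mono ι x < f.mono i x := by
    intro x hx ι hι i hi
    have h1 : f.eval x ≤ f.mono i x := f.eval_le i x
    have h2 : f.mono i x ≠ f.eval x := fun hh => hi (hUtropf x hx i ι hh hι)
    rw [hι]
    exact lt_of_le_of_ne h1 (Ne.symm h2)
  have hx₀A : ∀ i, i ≠ ι₀ → f.mono ι₀ x₀ < f.mono i x₀ := hstrict_at x₀ hUx₀ ι₀ hι₀
  -- connectedness: the argmin of f is ι₀ on all of U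
  set SA : Set (Fin n → ℝ) := {x | ∀ j, j ≠ ι₀ → f.mono ι₀ x < f.mono j x} with hSAdef
  set SB : Set (Fin n → ℝ) :=
    ⋃ j : Fin f.k, {x | j ≠ ι₀ ∧ ∀ i, i ≠ j → f.mono j x < f.mono i x} with hSBdef
  have hAopen : IsOpen SA := by
    rw [hSAdef]
    have hrw : {x | ∀ j, j ≠ ι₀ → f.mono ι₀ x < f.mono j x}
        = ⋂ j, {x | j ≠ ι₀ → f.mono ι₀ x < f.mono j x} := by
      ext x; simp [Set.mem_iInter]
    rw [hrw]
    refine isOpen_iInter_of_finite fun j => ?_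
    by_cases hj : j = ι₀
    · have he1 : {x | j ≠ ι₀ → f.mono ι₀ x < f.mono j x} = Set.univ := by
        ext x; simp [hj]
      rw [he1]; exact isOpen_univ
    · have he1 : {x | j ≠ ι₀ → f.mono ι₀ x < f.mono j x}
          = {x | f.mono ι₀ x < f.mono j x} := by ext x; simp [hj]
      rw [he1]
      exact isOpen_lt (f.mono_continuous ι₀) (f.mono_continuous j)
  have hBopen : IsOpen SB := by
    rw [hSBdef]
    refine isOpen_iUnion fun j => ?_
    by_cases hj : j = ι₀
    · have he1 : {x | j ≠ ι₀ ∧ ∀ i, i ≠ j → f.mono j x < f.mono i x} = ∅ := by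
        ext x; simp [hj]
      rw [he1]; exact isOpen_empty
    · have he1 : {x | j ≠ ι₀ ∧ ∀ i, i ≠ j → f.mono j x < f.mono i x}
          = ⋂ i, {x | i ≠ j → f.mono j x < f.mono i x} := by
        ext x; simp [Set.mem_iInter, hj]
      rw [he1]
      refine isOpen_iInter_of_finite fun i => ?_
      by_cases hi : i = j
      · have he2 : {x | i ≠ j → f.mono j x < f.mono i x} = Set.univ := by
          ext x; simp [hi]
        rw [he2]; exact isOpen_univ
      · have he2 : {x | i ≠ j → f.mono j x < f.mono i x}
            = {x | f.mono j x < f.mono i x} := by ext x; simp [hi]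
        rw [he2]
        exact isOpen_lt (f.mono_continuous j) (f.mono_continuous i)
  have hUsub : U ⊆ SA ∪ SB := by
    intro x hx
    obtain ⟨ι, hι⟩ := f.exists_eval_eq x
    have hst := hstrict_at x hx ι hι
    by_cases hι₀eq : ι = ι₀
    · left
      intro j hj
      rw [← hι₀eq]
      exact hst j (by rw [hι₀eq]; exact hj)
    · right
      exact Set.mem_iUnion.mpr ⟨ι, hι₀eq, hst⟩
  have hUA : ∀ x ∈ U, ∀ j, j ≠ ι₀ → f.mono ι₀ x < f.mono j x := by
    intro x hx
    have hpre : IsPreconnected U := hUconv.isPreconnected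
    by_contra hxA
    have hxB : x ∈ SB := by
      rcases hUsub hx with hA | hB
      · exact absurd hA hxA
      · exact hB
    obtain ⟨z, hzU, hzA, hzB⟩ :=
      hpre SA SB hAopen hBopen hUsub ⟨x₀, hUx₀, hx₀A⟩ ⟨x, hx, hxB⟩
    obtain ⟨j, hjB⟩ := Set.mem_iUnion.mp hzB
    obtain ⟨hjne, hjlt⟩ := hjB
    have h1 : f.mono ι₀ z < f.mono j z := hzA j hjne
    have h2 : f.mono j z < f.mono ι₀ z := hjlt ι₀ (fun hh => hjne hh.symm)
    linarith
  have key_f : ∀ x ∈ U, ∀ j, f.mono ι₀ x ≤ f.mono j x := by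
    intro x hx j
    by_cases hj : j = ι₀
    · rw [hj]
    · exact (hUA x hx j hj).le
  -- `u` and hull bounds
  set u : (Fin n → ℝ) × ℝ := f.pgen ι₀ with hudef
  have humem : u ∈ f.newton := f.pgen_mem_newton ι₀
  have hψu : ∀ x : Fin n → ℝ, psiL x 1 u = f.mono ι₀ x := fun x => psi_pgen f ι₀ x
  have hψv : ∀ x : Fin n → ℝ, psiL x 1 v = g.mono istar x := by
    intro x; rw [hveq]; exact psi_pgen g istar x
  have hullf : ∀ x : Fin n → ℝ, (∀ j, f.mono ι₀ x ≤ f.mono j x) →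
      ∀ w ∈ f.newton, psiL x 1 u ≤ psiL x 1 w := by
    intro x hx w hw
    refine psi_hull_le (S := f.gens) ?_ w hw
    rintro s ⟨i, hs1, hs2⟩
    rw [psi_gens f i x hs1, hψu]
    linarith [hx i]
  have hullg : ∀ x : Fin n → ℝ, (∀ j, g.mono istar x ≤ g.mono j x) →
      ∀ z ∈ g.newton, psiL x 1 v ≤ psiL x 1 z := by
    intro x hx z hz
    refine psi_hull_le (S := g.gens) ?_ z hz
    rintro s ⟨i, hs1, hs2⟩
    rw [psi_gens g i x hs1, hψv]
    linarith [hx i]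
  -- `u` is the unique minimiser of `ψ_{x₀,1}` on `N(f)`
  have hmin_gens : ∀ s ∈ f.gens, psiL x₀ 1 u ≤ psiL x₀ 1 s := by
    rintro s ⟨i, hs1, hs2⟩
    rw [psi_gens f i x₀ hs1, hψu]
    by_cases hi : i = ι₀
    · rw [hi]; rw [hi] at hs2; linarith
    · linarith [hx₀A i hi, hs2]
  have heq_gens : ∀ s ∈ f.gens, psiL x₀ 1 s ≤ psiL x₀ 1 u → s = u := by
    rintro s ⟨i, hs1, hs2⟩ hle
    rw [psi_gens f i x₀ hs1, hψu] at hle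
    by_cases hi : i = ι₀
    · rw [hi] at hle hs1 hs2
      have hs2' : s.2 = f.c ι₀ := le_antisymm (by linarith) hs2
      rw [hudef]
      exact Prod.ext hs1 hs2'
    · exact absurd hle (not_le.mpr (by linarith [hx₀A i hi, hs2]))
  have huniqmin : ∀ z ∈ f.newton, psiL x₀ 1 z ≤ psiL x₀ 1 u → z = u := by
    intro z hz hle
    rw [f.newton_eq, _root_.convexHull_eq] at hz
    obtain ⟨ι', T, w, zz, hw0, hw1, hzz, hcm⟩ := hz
    rw [Finset.centerMass_eq_of_sum_1 _ _ hw1] at hcm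
    have hψz : psiL x₀ 1 z = ∑ i ∈ T, w i * psiL x₀ 1 (zz i) := by
      rw [← hcm, map_sum]
      exact Finset.sum_congr rfl fun i _ => by rw [map_smul, smul_eq_mul]
    have hterm : ∀ i ∈ T, 0 ≤ w i * (psiL x₀ 1 (zz i) - psiL x₀ 1 u) :=
      fun i hi => mul_nonneg (hw0 i hi) (sub_nonneg.mpr (hmin_gens _ (hzz i hi)))
    have hsum0 : ∑ i ∈ T, w i * (psiL x₀ 1 (zz i) - psiL x₀ 1 u)
        = psiL x₀ 1 z - psiL x₀ 1 u := by
      simp only [mul_sub]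
      rw [Finset.sum_sub_distrib, ← Finset.sum_mul, hw1, one_mul, hψz]
    have hzero : ∀ i ∈ T, w i * (psiL x₀ 1 (zz i) - psiL x₀ 1 u) = 0 := by
      have hs0 : ∑ i ∈ T, w i * (psiL x₀ 1 (zz i) - psiL x₀ 1 u) = 0 := by
        refine le_antisymm ?_ (Finset.sum_nonneg hterm)
        rw [hsum0]; linarith
      exact (Finset.sum_eq_zero_iff_of_nonneg hterm).mp hs0
    have hz_eq : z = ∑ i ∈ T, w i • u := by
      rw [← hcm]
      refine Finset.sum_congr rfl fun i hi => ?_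
      by_cases hwi : w i = 0
      · rw [hwi, zero_smul, zero_smul]
      · have h1 : psiL x₀ 1 (zz i) - psiL x₀ 1 u = 0 := by
          rcases mul_eq_zero.mp (hzero i hi) with h' | h'
          · exact absurd h' hwi
          · exact h'
        have h2 : zz i = u := heq_gens _ (hzz i hi) (le_of_eq (sub_eq_zero.mp h1))
        rw [h2]
    rw [hz_eq, ← Finset.sum_smul, hw1, one_smul]
  have huext : u ∈ Set.extremePoints ℝ f.newton := by
    refine ⟨humem, ?_⟩
    intro x₁ hx₁ x₂ hx₂ hseg
    obtain ⟨aa, bb, haa, hbb, hab, habeq⟩ := hseg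
    have h1 : psiL x₀ 1 u ≤ psiL x₀ 1 x₁ := hullf x₀ (key_f x₀ hUx₀) x₁ hx₁
    have h2 : psiL x₀ 1 u ≤ psiL x₀ 1 x₂ := hullf x₀ (key_f x₀ hUx₀) x₂ hx₂
    have h3 : aa * psiL x₀ 1 x₁ + bb * psiL x₀ 1 x₂ = psiL x₀ 1 u := by
      rw [← habeq, map_add, map_smul, map_smul, smul_eq_mul, smul_eq_mul]
    have hab' : (aa + bb) * psiL x₀ 1 u = psiL x₀ 1 u := by rw [hab, one_mul]
    have h4 : psiL x₀ 1 x₁ ≤ psiL x₀ 1 u := by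
      by_contra hgt
      push_neg at hgt
      have hp := mul_pos haa (sub_pos.mpr hgt)
      have hq : 0 ≤ bb * (psiL x₀ 1 x₂ - psiL x₀ 1 u) := mul_nonneg hbb.le (by linarith)
      nlinarith [h3, hab']
    have h5 : psiL x₀ 1 x₂ ≤ psiL x₀ 1 u := by
      by_contra hgt
      push_neg at hgt
      have hp := mul_pos hbb (sub_pos.mpr hgt)
      have hq : 0 ≤ aa * (psiL x₀ 1 x₁ - psiL x₀ 1 u) := mul_nonneg haa.le (by linarith)
      nlinarith [h3, hab']
    exact huniqmin x₁ hx₁ h4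
  -- the transfer lemma
  have case_pos : ∀ (x : Fin n → ℝ) (t : ℝ), 0 < t →
      (∀ z ∈ g.newton, 0 ≤ psiL x t z - psiL x t v) →
      ∀ w ∈ f.newton, 0 ≤ psiL x t w - psiL x t u := by
    intro x t ht hgz w hw
    set x' : Fin n → ℝ := fun j => x j / t with hx'def
    have hpsit : ∀ z, psiL x t z = t * psiL x' 1 z := fun z => psi_div x ht.ne' z
    have hg' : ∀ j, g.mono istar x' ≤ g.mono j x' := by
      intro j
      have h1 := hgz (g.pgen j) (g.pgen_mem_newton j)
      rw [hpsit, hpsit, ← mul_sub] at h1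
      have h2 : 0 ≤ psiL x' 1 (g.pgen j) - psiL x' 1 v := by
        by_contra hneg
        push_neg at hneg
        have := mul_neg_of_pos_of_neg ht hneg
        linarith
      rw [psi_pgen g j x', hψv x'] at h2
      linarith
    have hfk : ∀ s : ℝ, 0 < s → s ≤ 1 →
        0 ≤ (psiL x' 1 w - psiL x' 1 u)
          + s * ((psiL x₀ 1 w - psiL x₀ 1 u) - (psiL x' 1 w - psiL x' 1 u)) := by
      intro s hs hs1
      have hsum1 : (1 - s) + s = 1 := by ring
      have hxsU : (fun j => (1 - s) * x' j + s * x₀ j) ∈ U := by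
        intro j hj
        show g.mono istar _ < g.mono j _
        rw [g.mono_affine istar x' x₀ hsum1, g.mono_affine j x' x₀ hsum1]
        exact combo_le_lt (by linarith) hs (hg' j) (hx₀U j hj)
      have h2 := hullf (fun j => (1 - s) * x' j + s * x₀ j) (key_f _ hxsU) w hw
      have hc1 := psi_comb (1-s) s x' x₀ 1 1 w
      have hc2 := psi_comb (1-s) s x' x₀ 1 1 u
      rw [show (1-s)*1 + s*1 = (1:ℝ) by ring] at hc1 hc2
      rw [hc1, hc2] at h2
      linarith
    have h4 := nonneg_of_small _ _ hfk
    rw [hpsit w, hpsit u, ← mul_sub]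
    exact mul_nonneg ht.le h4
  have transfer : ∀ (x : Fin n → ℝ) (t : ℝ), 0 ≤ t →
      (∀ z ∈ g.newton, 0 ≤ psiL x t z - psiL x t v) →
      ∀ w ∈ f.newton, 0 ≤ psiL x t w - psiL x t u := by
    intro x t ht hgz w hw
    rcases ht.lt_or_eq with htpos | ht0
    · exact case_pos x t htpos hgz w hw
    · subst ht0
      have hx₀g : ∀ j, g.mono istar x₀ ≤ g.mono j x₀ := hUg x₀ hUx₀
      have hdec : ∀ (ε : ℝ) (y : (Fin n → ℝ) × ℝ),
          psiL (fun j => x j + ε * x₀ j) ε y = psiL x 0 y + ε * psiL x₀ 1 y := by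
        intro ε y
        have hc := psi_comb 1 ε x x₀ 0 1 y
        rw [show (1:ℝ)*0 + ε*1 = ε by ring] at hc
        rw [show (fun j => 1 * x j + ε * x₀ j) = (fun j => x j + ε * x₀ j) from
          by funext j; ring] at hc
        rw [one_mul] at hc
        exact hc
      have hsmall : ∀ s : ℝ, 0 < s → s ≤ 1 →
          0 ≤ (psiL x 0 w - psiL x 0 u) + s * (psiL x₀ 1 w - psiL x₀ 1 u) := by
        intro s hs _
        have hgz' : ∀ z ∈ g.newton, 0 ≤ psiL (fun j => x j + s * x₀ j) s z
            - psiL (fun j => x j + s * x₀ j) s v := by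
          intro z hz
          rw [hdec, hdec]
          have ha := hgz z hz
          have hb : 0 ≤ psiL x₀ 1 z - psiL x₀ 1 v :=
            sub_nonneg.mpr (hullg x₀ hx₀g z hz)
          have hc := mul_nonneg hs.le hb
          linarith
        have hcp := case_pos _ s hs hgz' w hw
        rw [hdec, hdec] at hcp
        linarith
      exact nonneg_of_small _ _ hsmall
  -- conclusion: the cone inclusion
  refine ⟨u, huext, ?_⟩
  intro y hy
  by_contra hyC
  set dg : Fin (g.k + 1) → ((Fin n → ℝ) × ℝ) :=
    Fin.snoc (fun j => g.pgen j - v) ee with hdgdef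
  have hCeq : coneGen ((fun z => z - v) '' g.newton) = coneGen (Set.range dg) := by
    apply Set.Subset.antisymm
    · apply coneGen_subset
      rintro _ ⟨z, hz, rfl⟩
      rw [g.newton_eq, _root_.convexHull_eq] at hz
      obtain ⟨ι', T, w, zz, hw0, hw1, hzz, hcm⟩ := hz
      rw [Finset.centerMass_eq_of_sum_1 _ _ hw1] at hcm
      have hzv : z - v = ∑ i ∈ T, w i • (zz i - v) := by
        have hv' : ∑ i ∈ T, w i • v = v := by rw [← Finset.sum_smul, hw1, one_smul]
        calc z - v = (∑ i ∈ T, w i • zz i) - ∑ i ∈ T, w i • v := by rw [hcm, hv']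
        _ = ∑ i ∈ T, (w i • zz i - w i • v) := (Finset.sum_sub_distrib _ _).symm
        _ = ∑ i ∈ T, w i • (zz i - v) :=
            Finset.sum_congr rfl fun i _ => (smul_sub _ _ _).symm
      show z - v ∈ coneGen (Set.range dg)
      rw [hzv]
      refine coneGen_sum T w _ hw0 ?_
      intro i hi
      obtain ⟨jj, hz1, hz2⟩ := hzz i hi
      have hzzi : zz i - v
          = dg (Fin.castSucc jj) + ((zz i).2 - g.c jj) • dg (Fin.last g.k) := by
        rw [hdgdef]
        simp only [Fin.snoc_castSucc, Fin.snoc_last]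
        refine Prod.ext ?_ ?_
        · show (zz i).1 - v.1 = (g.pgen jj - v).1 + (((zz i).2 - g.c jj) • ee).1
          rw [Prod.fst_sub, Prod.smul_fst, heedef]
          simp [TropPoly.pgen, hz1]
        · show (zz i).2 - v.2 = (g.pgen jj - v).2 + (((zz i).2 - g.c jj) • ee).2
          rw [Prod.snd_sub, Prod.smul_snd, heedef]
          simp only [TropPoly.pgen, smul_eq_mul]
          ring
      rw [hzzi]
      exact coneGen_add (mem_coneGen ⟨Fin.castSucc jj, rfl⟩)
        (coneGen_smul (by linarith) (mem_coneGen ⟨Fin.last g.k, rfl⟩))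
    · apply coneGen_subset
      rintro _ ⟨j, rfl⟩
      refine Fin.lastCases ?_ (fun jj => ?_) j
      · rw [hdgdef, Fin.snoc_last]
        exact mem_coneGen ⟨v + ee, hve_newton, add_sub_cancel_left v ee⟩
      · rw [hdgdef, Fin.snoc_castSucc]
        exact mem_coneGen ⟨g.pgen jj, g.pgen_mem_newton jj, rfl⟩
  have hCclosed : IsClosed (coneGen ((fun z => z - v) '' g.newton)) := by
    rw [hCeq]; exact isClosed_coneGen_range dg
  obtain ⟨ℓ₂, r₂, hr1, hr2⟩ := geometric_hahn_banach_point_closed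
    (coneGen_convex _) hCclosed hyC
  have hnn : ∀ b ∈ coneGen ((fun z => z - v) '' g.newton), 0 ≤ ℓ₂ b := by
    intro b hb
    by_contra hneg
    push_neg at hneg
    obtain ⟨m', hm'⟩ := exists_nat_gt (r₂ / ℓ₂ b)
    have h1 := hr2 _ (coneGen_smul (Nat.cast_nonneg m') hb)
    rw [map_smul, smul_eq_mul] at h1
    have h2 : (m' : ℝ) * ℓ₂ b < r₂ := by
      have := (div_lt_iff_of_neg hneg).mp hm'
      linarith
    linarith
  have hr₂neg : r₂ < 0 := by
    have := hr2 0 (coneGen_zero _)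
    rwa [map_zero] at this
  have hψ₂ : ∀ p, ℓ₂ p = psiL (fun j => ℓ₂ ((Pi.single j 1 : Fin n → ℝ), (0:ℝ)))
      (ℓ₂ ((0 : Fin n → ℝ), (1:ℝ))) p := clm_decomp ℓ₂
  have htl₂ : 0 ≤ ℓ₂ ((0 : Fin n → ℝ), (1:ℝ)) := by
    have hee : ee ∈ coneGen ((fun z => z - v) '' g.newton) :=
      mem_coneGen ⟨v + ee, hve_newton, add_sub_cancel_left v ee⟩
    have hres := hnn ee hee
    rwa [heedef] at hres
  have hgz : ∀ z ∈ g.newton,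
      0 ≤ psiL (fun j => ℓ₂ ((Pi.single j 1 : Fin n → ℝ), (0:ℝ)))
          (ℓ₂ ((0 : Fin n → ℝ), (1:ℝ))) z
        - psiL (fun j => ℓ₂ ((Pi.single j 1 : Fin n → ℝ), (0:ℝ)))
          (ℓ₂ ((0 : Fin n → ℝ), (1:ℝ))) v := by
    intro z hz
    have h1 := hnn _ (mem_coneGen (⟨z, hz, rfl⟩ :
      z - v ∈ (fun z => z - v) '' g.newton))
    rw [hψ₂, map_sub] at h1
    exact h1
  have hfw := transfer _ _ htl₂ hgz
  obtain ⟨m, tt, pp, htt, hpp, hyeq⟩ := hy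
  have hyn : 0 ≤ ℓ₂ y := by
    rw [hyeq, map_sum]
    refine Finset.sum_nonneg fun i _ => ?_
    rw [map_smul, smul_eq_mul]
    refine mul_nonneg (htt i) ?_
    obtain ⟨w, hw, hweq⟩ := hpp i
    rw [← hweq]
    show 0 ≤ ℓ₂ (w - u)
    rw [hψ₂, map_sub]
    exact hfw w hw
  linarith [hr1, hr₂neg, hyn]
end

section
/- Let f and g be tropical polynomials in n variables with Trop(f) ⊆ Trop(g), and let v be a vertex (extreme point) of the Newton polyhedron N(g). Then there exists a unique point u ∈ N(f) such that for every x ∈ ℝⁿ for which the linear functional φ_x attains its minimum over N(g) at v and at no other point of N(g), the functional φ_x attains its minimum over N(f) at u and at no other point of N(f). In particular, the minimizing point of φ_x on N(f) is the same for all such x. -/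
open Finset

/-! An extreme point `v` of `N(g)` is the point `(a i, c i)` of a monomial of `g`, and `φ_x` is
uniquely minimised over a Newton polyhedron at the point of monomial `i` exactly when `x` lies in
the open cell where monomial `i` alone attains the tropical minimum. These cells are convex, and
the cells of `f` are open, pairwise disjoint and cover the complement of `Trop(f)`. The cell of
`g` at `v` is connected and avoids `Trop(g) ⊇ Trop(f)`, so it lies inside a single cell of `f`;
the point of that monomial of `f` is `u`. The cell of `v` is nonempty because, by Hahn–Banach,
`v` can be strictly separated from the other monomial points of `g` and the point above `v`. -/

def IsUniqueMinOn {α β : Type*} [Preorder β] (φ : α → β) (s : Set α) (a : α) : Prop :=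
  IsMinOn φ s a ∧ ∀ b ∈ s, IsMinOn φ s b → b = a

section LinearFunctional

variable {E : Type*} [AddCommGroup E] [Module ℝ E]

lemma convex_insert_setOf_lt {ℓ : E → ℝ} (hℓ : IsLinearMap ℝ ℓ) (a : E) :
    Convex ℝ (insert a {b | ℓ a < ℓ b}) := by
  have hcomb : ∀ {b : E} {s t : ℝ}, ℓ a < ℓ b → 0 ≤ s → 0 < t → s + t = 1 →
      ℓ a < ℓ (s • a + t • b) := by
    intro b s t hb hs ht hst
    rw [hℓ.map_add, hℓ.map_smul, hℓ.map_smul, smul_eq_mul, smul_eq_mul]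
    calc ℓ a = s * ℓ a + t * ℓ a := by rw [← add_mul, hst, one_mul]
      _ < s * ℓ a + t * ℓ b := by gcongr
  rintro x (rfl | hx) y (rfl | hy) s t hs ht hst
  · rw [← add_smul, hst, one_smul]; exact Set.mem_insert _ _
  · rcases ht.eq_or_lt with rfl | ht
    · simp_all
    · exact Or.inr (hcomb hy hs ht hst)
  · rcases hs.eq_or_lt with rfl | hs
    · simp_all
    · rw [add_comm]; exact Or.inr (hcomb hx ht hs (by linarith))
  · exact Or.inr (convex_halfSpace_gt hℓ (ℓ a) hx hy hs ht hst)

lemma isUniqueMinOn_convexHull {ℓ : E → ℝ} (hℓ : IsLinearMap ℝ ℓ) {s : Set E} {a : E}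
    (ha : a ∈ s) (hs : ∀ b ∈ s, b ≠ a → ℓ a < ℓ b) :
    IsUniqueMinOn ℓ (convexHull ℝ s) a := by
  have hhull : convexHull ℝ s ⊆ insert a {b | ℓ a < ℓ b} :=
    convexHull_min (fun b hb => (eq_or_ne b a).imp id (hs b hb)) (convex_insert_setOf_lt hℓ a)
  refine ⟨isMinOn_iff.2 fun b hb => ?_, fun b hb hmin => ?_⟩
  · rcases hhull hb with rfl | hb
    exacts [le_rfl, hb.le]
  · have hba : ℓ b ≤ ℓ a := isMinOn_iff.1 hmin a (subset_convexHull ℝ s ha)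
    exact (hhull hb).resolve_right (not_lt.2 hba)

end LinearFunctional

section Phi

variable {n : ℕ}

lemma phi_add (x : Fin n → ℝ) (p q : (Fin n → ℝ) × ℝ) :
    phi x (p + q) = phi x p + phi x q := by
  simp only [phi, Prod.fst_add, Prod.snd_add, Pi.add_apply, mul_add, Finset.sum_add_distrib]
  ring

lemma phi_smul (x : Fin n → ℝ) (t : ℝ) (p : (Fin n → ℝ) × ℝ) :
    phi x (t • p) = t * phi x p := by
  simp only [phi, Prod.smul_fst, Prod.smul_snd, Pi.smul_apply, smul_eq_mul, mul_add,
    Finset.mul_sum, mul_left_comm]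

lemma isLinearMap_phi (x : Fin n → ℝ) : IsLinearMap ℝ (phi x) :=
  ⟨phi_add x, phi_smul x⟩

lemma exists_eq_mul_phi (l : ((Fin n → ℝ) × ℝ) →ₗ[ℝ] ℝ) (hl : l (0, 1) ≠ 0) :
    ∃ x : Fin n → ℝ, ∀ p, l p = l (0, 1) * phi x p := by
  set lz := l.comp (LinearMap.inl ℝ (Fin n → ℝ) ℝ)
  refine ⟨fun j => lz (fun k => if j = k then 1 else 0) / l (0, 1), fun p => ?_⟩
  have hsplit : l p = lz p.1 + p.2 * l (0, 1) := by
    conv_lhs => rw [← Prod.fst_add_snd p]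
    rw [map_add, ← smul_eq_mul, ← map_smul]
    simp [lz]
  rw [hsplit, lz.pi_apply_eq_sum_univ, phi, mul_add, Finset.mul_sum]
  congr 1
  · refine Finset.sum_congr rfl fun j _ => ?_
    rw [smul_eq_mul]
    field_simp
  · ring

lemma exists_phi_lt_of_notMem_convexHull {F : Set ((Fin n → ℝ) × ℝ)}
    (hF : F.Finite) {v : (Fin n → ℝ) × ℝ} (hvF : v + (0, 1) ∈ F)
    (hv : v ∉ convexHull ℝ F) : ∃ x : Fin n → ℝ, ∀ p ∈ F, phi x v < phi x p := by
  obtain ⟨l, u, hlv, hlF⟩ := geometric_hahn_banach_point_closed (convex_convexHull ℝ F)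
    (hF.isClosed_convexHull (𝕜 := ℝ)) hv
  have hsep : ∀ p ∈ F, l v < l p := fun p hp => hlv.trans (hlF p (subset_convexHull ℝ F hp))
  -- separating `v` from `v + (0, 1)` makes `l` increasing upwards, so it rescales to some `φ_x`
  have hpos : 0 < l (0, 1) := by
    have := hsep _ hvF
    rw [map_add] at this
    linarith
  obtain ⟨x, hx⟩ := exists_eq_mul_phi l.toLinearMap hpos.ne'
  refine ⟨x, fun p hp => ?_⟩
  simp only [ContinuousLinearMap.coe_coe] at hx
  have := hsep p hp
  rw [hx v, hx p] at this
  exact lt_of_mul_lt_mul_left this hpos.le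

end Phi

namespace TropPoly

variable {n : ℕ} (f : TropPoly n)

noncomputable def point (i : Fin f.k) : (Fin n → ℝ) × ℝ :=
  (fun j => (f.a i j : ℝ), f.c i)

lemma point_injective : Function.Injective f.point := by
  intro i j h
  simp only [point, Prod.mk.injEq] at h
  apply f.distinct
  simp only [Prod.mk.injEq]
  exact ⟨funext fun m => by exact_mod_cast congrFun h.1 m, h.2⟩

lemma point_mem_newton (i : Fin f.k) : f.point i ∈ f.newton :=
  subset_convexHull ℝ _ ⟨i, rfl, le_rfl⟩

lemma phi_eq_mono_add (x : Fin n → ℝ) {i : Fin f.k} {p : (Fin n → ℝ) × ℝ}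
    (hp : p.1 = fun j => (f.a i j : ℝ)) : phi x p = f.mono i x + (p.2 - f.c i) := by
  simp only [phi, mono, hp, mul_comm (x _)]
  ring

lemma phi_point (x : Fin n → ℝ) (i : Fin f.k) : phi x (f.point i) = f.mono i x := by
  rw [f.phi_eq_mono_add x rfl, point, sub_self, add_zero]

lemma extremePoints_newton_subset : f.newton.extremePoints ℝ ⊆ Set.range f.point := by
  intro v hv
  obtain ⟨i, hi, hci⟩ := extremePoints_convexHull_subset hv
  -- `v` is the midpoint of `point i` and its reflection through `v`, on the same vertical ray
  refine ⟨i, hv.2 (f.point_mem_newton i) (x₂ := 2 • v - f.point i) ?_ ?_⟩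
  · refine subset_convexHull ℝ _ ⟨i, ?_, ?_⟩
    · simp [point, hi, two_smul]
    · simp only [Prod.snd_sub, Prod.snd_add, point, two_smul]
      linarith
  · refine ⟨1 / 2, 1 / 2, by norm_num, by norm_num, by norm_num, ?_⟩
    module

lemma eval_le_mono (x : Fin n → ℝ) (i : Fin f.k) : f.eval x ≤ f.mono i x :=
  Finset.inf'_le _ (Finset.mem_univ i)

lemma exists_mono_eq_eval (x : Fin n → ℝ) : ∃ i, f.mono i x = f.eval x := by
  obtain ⟨i, -, hi⟩ := Finset.exists_mem_eq_inf' (s := Finset.univ) ⟨⟨0, f.hk⟩, Finset.mem_univ _⟩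
    fun i => f.mono i x
  exact ⟨i, hi.symm⟩

lemma continuous_mono (i : Fin f.k) : Continuous (f.mono i) := by
  unfold mono
  fun_prop

lemma mono_add_smul (i : Fin f.k) (x y : Fin n → ℝ) {s t : ℝ} (hst : s + t = 1) :
    f.mono i (s • x + t • y) = s * f.mono i x + t * f.mono i y := by
  simp only [mono, Pi.add_apply, Pi.smul_apply, smul_eq_mul, mul_add, Finset.sum_add_distrib,
    Finset.mul_sum, mul_left_comm _ s, mul_left_comm _ t]
  linear_combination f.c i * hst.symm

def cell (i : Fin f.k) : Set (Fin n → ℝ) :=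
  ⋂ j ∈ ({i}ᶜ : Set (Fin f.k)), {x | f.mono i x < f.mono j x}

lemma isOpen_cell (i : Fin f.k) : IsOpen (f.cell i) :=
  (Set.toFinite _).isOpen_biInter fun j _ =>
    isOpen_lt (f.continuous_mono i) (f.continuous_mono j)

lemma convex_cell (i : Fin f.k) : Convex ℝ (f.cell i) := by
  refine convex_iInter₂ fun j _ x hx y hy s t hs ht hst => ?_
  simp only [Set.mem_ofPred_eq, f.mono_add_smul _ x y hst] at hx hy ⊢
  rcases hs.eq_or_lt with rfl | hs
  · rw [zero_add] at hst
    subst hst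
    linarith
  · linarith [mul_lt_mul_of_pos_left hx hs, mul_le_mul_of_nonneg_left hy.le ht]

variable {f}

lemma mem_cell {i : Fin f.k} {x : Fin n → ℝ} :
    x ∈ f.cell i ↔ ∀ j ≠ i, f.mono i x < f.mono j x := by
  simp [cell]

lemma disjoint_cell {i j : Fin f.k} (hij : i ≠ j) : Disjoint (f.cell i) (f.cell j) :=
  Set.disjoint_left.2 fun _ hi hj =>
    (mem_cell.1 hi j hij.symm).not_gt (mem_cell.1 hj i hij)

lemma disjoint_cell_tropSet (i : Fin f.k) : Disjoint (f.cell i) f.tropSet := by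
  refine Set.disjoint_left.2 fun x hx ⟨j, l, hjl, hj, hl⟩ => hjl ?_
  have hmin : ∀ m, f.mono m x = f.eval x → m = i := fun m hm => by
    by_contra hmi
    linarith [f.eval_le_mono x i, mem_cell.1 hx m hmi]
  rw [hmin j hj, hmin l hl]

lemma exists_mem_cell {x : Fin n → ℝ} (hx : x ∉ f.tropSet) : ∃ i, x ∈ f.cell i := by
  obtain ⟨i, hi⟩ := f.exists_mono_eq_eval x
  refine ⟨i, mem_cell.2 fun j hji => (hi ▸ f.eval_le_mono x j).lt_of_ne fun hij => ?_⟩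
  exact hx ⟨j, i, hji, hij ▸ hi, hi⟩

lemma _root_.IsPreconnected.subset_cell {S : Set (Fin n → ℝ)} (hS : IsPreconnected S)
    (hST : Disjoint S f.tropSet) {x₀ : Fin n → ℝ} (hx₀S : x₀ ∈ S) {i : Fin f.k}
    (hx₀ : x₀ ∈ f.cell i) : S ⊆ f.cell i := by
  have hcover : S ⊆ f.cell i ∪ ⋃ j ∈ ({i}ᶜ : Set (Fin f.k)), f.cell j := by
    intro x hx
    obtain ⟨j, hj⟩ := exists_mem_cell (Set.disjoint_left.1 hST hx)
    rcases eq_or_ne j i with rfl | hji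
    exacts [Or.inl hj, Or.inr (Set.mem_biUnion hji hj)]
  refine hS.subset_left_of_subset_union (f.isOpen_cell i)
    (isOpen_biUnion fun j _ => f.isOpen_cell j)
    (Set.disjoint_iUnion₂_right.2 fun j hj => disjoint_cell (Ne.symm hj)) hcover ⟨x₀, hx₀S, hx₀⟩

lemma cell_subset_cell {g : TropPoly n} (h : f.tropSet ⊆ g.tropSet) {x₀ : Fin n → ℝ}
    {i : Fin g.k} {j : Fin f.k} (hx₀g : x₀ ∈ g.cell i) (hx₀f : x₀ ∈ f.cell j) :
    g.cell i ⊆ f.cell j :=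
  (g.convex_cell i).isPreconnected.subset_cell ((disjoint_cell_tropSet i).mono_right h)
    hx₀g hx₀f

lemma mem_cell_iff_isUniqueMinOn {x : Fin n → ℝ} {i : Fin f.k} :
    x ∈ f.cell i ↔ IsUniqueMinOn (phi x) f.newton (f.point i) := by
  constructor
  · intro hx
    refine isUniqueMinOn_convexHull (isLinearMap_phi x) ⟨i, rfl, le_rfl⟩ ?_
    rintro p ⟨j, hpj, hcp⟩ hpi
    rw [f.phi_point, f.phi_eq_mono_add x hpj]
    rcases eq_or_ne j i with rfl | hji
    · have : f.c j < p.2 := hcp.lt_of_ne fun hc => hpi (Prod.ext hpj hc.symm)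
      linarith
    · linarith [mem_cell.1 hx j hji]
  · rintro ⟨hmin, huniq⟩
    refine mem_cell.2 fun j hji => ?_
    have hle := f.phi_point x i ▸ f.phi_point x j ▸ isMinOn_iff.1 hmin _ (f.point_mem_newton j)
    refine hle.lt_of_ne fun heq => hji (f.point_injective ?_)
    refine huniq _ (f.point_mem_newton j) (isMinOn_iff.2 fun q hq => ?_)
    rw [f.phi_point, ← heq, ← f.phi_point]
    exact isMinOn_iff.1 hmin q hq

lemma exists_mem_cell_of_point_mem_extremePoints {i : Fin f.k}
    (hi : f.point i ∈ f.newton.extremePoints ℝ) : ∃ x, x ∈ f.cell i := by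
  set F := insert (f.point i + (0, 1)) (f.point '' {i}ᶜ)
  have hFN : F ⊆ f.newton \ {f.point i} := by
    rintro p (rfl | ⟨j, hji, rfl⟩)
    · refine ⟨subset_convexHull ℝ _ ⟨i, ?_, ?_⟩, ?_⟩
      · simp [point]
      · simp [point]
      · simp
    · exact ⟨f.point_mem_newton j, fun h => hji (f.point_injective h)⟩
  have hnot : f.point i ∉ convexHull ℝ F := fun h =>
    (((convex_convexHull ℝ _).mem_extremePoints_iff_mem_sdiff_convexHull_sdiff).1 hi).2
      (convexHull_mono hFN h)
  obtain ⟨x, hx⟩ := exists_phi_lt_of_notMem_convexHull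
    (((Set.finite_range f.point).subset (Set.image_subset_range _ _)).insert _)
    (Set.mem_insert _ _) hnot
  refine ⟨x, mem_cell.2 fun j hji => ?_⟩
  rw [← f.phi_point, ← f.phi_point]
  exact hx _ (Set.mem_insert_of_mem _ ⟨j, hji, rfl⟩)

end TropPoly

/-- if `Trop(f) ⊆ Trop(g)` and `v` is an extreme point of `N(g)`,
there is a unique point `u ∈ N(f)` such that for every `x` for which `φ_x`
attains its minimum over `N(g)` at `v` and at no other point of `N(g)`,
the functional `φ_x` attains its minimum over `N(f)` at `u` and at no other
point of `N(f)`. -/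
theorem unique_companion_vertex {n : ℕ} (f g : TropPoly n)
    (h : f.tropSet ⊆ g.tropSet) (v : (Fin n → ℝ) × ℝ)
    (hv : v ∈ Set.extremePoints ℝ g.newton) :
    ∃! u : (Fin n → ℝ) × ℝ, u ∈ f.newton ∧
      ∀ x : Fin n → ℝ,
        ((∀ q ∈ g.newton, phi x v ≤ phi x q) ∧
          (∀ q ∈ g.newton, (∀ r ∈ g.newton, phi x q ≤ phi x r) → q = v)) →
        ((∀ q ∈ f.newton, phi x u ≤ phi x q) ∧
          (∀ q ∈ f.newton, (∀ r ∈ f.newton, phi x q ≤ phi x r) → q = u)) := by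
  obtain ⟨i, rfl⟩ := g.extremePoints_newton_subset hv
  obtain ⟨x₀, hx₀g⟩ := g.exists_mem_cell_of_point_mem_extremePoints hv
  obtain ⟨j, hx₀f⟩ := f.exists_mem_cell fun hx₀ =>
    Set.disjoint_left.1 (g.disjoint_cell_tropSet i) hx₀g (h hx₀)
  have hcell : g.cell i ⊆ f.cell j := TropPoly.cell_subset_cell h hx₀g hx₀f
  refine ⟨f.point j, ⟨f.point_mem_newton j, fun x hx => ?_⟩, fun u ⟨_, hu⟩ => ?_⟩
  · exact f.mem_cell_iff_isUniqueMinOn.1 (hcell (g.mem_cell_iff_isUniqueMinOn.2 hx))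
  · have hx₀u : IsUniqueMinOn (phi x₀) f.newton u := hu x₀ (g.mem_cell_iff_isUniqueMinOn.1 hx₀g)
    exact (hx₀u.2 _ (f.point_mem_newton j) (f.mem_cell_iff_isUniqueMinOn.1 hx₀f).1).symm
end
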